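/- Let X be a locally connected space. For any cosheaf Q on X and any abelian group G there is a natural isomorphism Hom_Coshv(Q, G^cos) ≅ Hom_Ab(Q(X), G); i.e. the constant-cosheaf functor G ↦ G^cos is right adjoint to global sections of cosheaves Q ↦ Q(X). -/

import Mathlib

open CategoryTheory CategoryTheory.Limits TopologicalSpace Opposite

noncomputable section

abbrev Shv (X : TopCat.{u}) := TopCat.Sheaf AddCommGrpCat.{u} X

variable {X : TopCat.{u}}

/-- connected nonempty opens contained in `U` -/
abbrev ConnIn (X : TopCat.{u}) (U : Opens X) : Type u :=
  ObjectProperty.FullSubcategory (fun W : Opens X => W ≤ U ∧ (W : Set X).Nonempty ∧ IsConnected (W : Set X))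

def dgm (F : Shv X) (U : Opens X) : (ConnIn X U)ᵒᵖ ⥤ AddCommGrpCat.{u} :=
  (ObjectProperty.ι _).op ⋙ F.val

def connInMap {V U : Opens X} (h : V ≤ U) : ConnIn X V ⥤ ConnIn X U :=
  ObjectProperty.ιOfLE (fun W hw => ⟨le_trans hw.1 h, hw.2⟩)

/-- The associated precosheaf of a sheaf `F`:
`cos(F)(U) = L(U, F|_U) = colim_{W ⊆ U connected nonempty} F(W)`. -/
def cosPre (F : Shv X) : Opens X ⥤ AddCommGrpCat.{u} where
  obj U := colimit (dgm F U)
  map {V U} h := colimit.pre (dgm F U) (connInMap h.le).op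
  map_id U := by
    refine colimit.hom_ext (F := dgm F U) ?_
    intro j
    rw [Category.comp_id]
    exact colimit.ι_pre (dgm F U) (connInMap le_rfl).op j
  map_comp {V W U} h h' := by
    refine colimit.hom_ext (F := dgm F V) ?_
    intro j
    have A : colimit.ι (dgm F V) j ≫ colimit.pre (dgm F U) (connInMap (leOfHom (h ≫ h'))).op =
        colimit.ι (dgm F U) ((connInMap (leOfHom (h ≫ h'))).op.obj j) :=
      colimit.ι_pre (dgm F U) (connInMap (leOfHom (h ≫ h'))).op j
    have B : colimit.ι (dgm F V) j ≫ colimit.pre (dgm F W) (connInMap (leOfHom h)).op =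
        colimit.ι (dgm F W) ((connInMap (leOfHom h)).op.obj j) :=
      colimit.ι_pre (dgm F W) (connInMap (leOfHom h)).op j
    have C : colimit.ι (dgm F W) ((connInMap (leOfHom h)).op.obj j) ≫
        colimit.pre (dgm F U) (connInMap (leOfHom h')).op =
        colimit.ι (dgm F U) ((connInMap (leOfHom h')).op.obj ((connInMap (leOfHom h)).op.obj j)) :=
      colimit.ι_pre (dgm F U) (connInMap (leOfHom h')).op _
    exact A.trans (C.symm.trans ((congrArg (fun k => k ≫ colimit.pre (dgm F U)
      (connInMap (leOfHom h')).op) B).symm.trans (Category.assoc _ _ _)))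



variable {X : TopCat.{u}}

/-- A precosheaf (of abelian groups) on `X` is a covariant functor on open subsets. -/
abbrev Precosheaf (X : TopCat.{u}) := Opens X ⥤ AddCommGrpCat.{u}

/-- The map `⊕_i Q(U_i) → Q(U)` for a cover `U = ⨆ U_i`, given by the corestrictions. -/
def coverSum (Q : Precosheaf X) {ι : Type u} [DecidableEq ι] (V : ι → Opens X) :
    (DirectSum ι (fun i => (Q.obj (V i) : Type u))) →+ Q.obj (⨆ i, V i) :=
  DirectSum.toAddMonoid fun i => (Q.map (homOfLE (le_iSup V i))).hom

/-- The map `⊕_{i,j} Q(U_i ∩ U_j) → ⊕_i Q(U_i)`, given on the `(i,j)` component by the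
difference of the corestrictions into the `i`-th and `j`-th summands. -/
def coverDiff (Q : Precosheaf X) {ι : Type u} [DecidableEq ι] (V : ι → Opens X) :
    (DirectSum (ι × ι) (fun p => (Q.obj (V p.1 ⊓ V p.2) : Type u))) →+ DirectSum ι (fun i => (Q.obj (V i) : Type u)) :=
  DirectSum.toAddMonoid fun p =>
    ((DirectSum.of (fun i => (Q.obj (V i) : Type u)) p.1).comp
        ((Q.map (homOfLE inf_le_left)).hom : Q.obj (V p.1 ⊓ V p.2) →+ Q.obj (V p.1))) -
    ((DirectSum.of (fun i => (Q.obj (V i) : Type u)) p.2).comp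
        ((Q.map (homOfLE inf_le_right)).hom : Q.obj (V p.1 ⊓ V p.2) →+ Q.obj (V p.2)))

/-- A precosheaf is a cosheaf if for every open cover `U = ⨆ᵢ Uᵢ` the sequence
`⊕_{i,j} Q(U_i ∩ U_j) → ⊕_i Q(U_i) → Q(U) → 0` is exact. -/
def IsCosheaf (Q : Precosheaf X) : Prop :=
  ∀ (ι : Type u) (_ : DecidableEq ι) (V : ι → Opens X),
    Function.Surjective (coverSum Q V) ∧
    AddMonoidHom.range (coverDiff Q V) = AddMonoidHom.ker (coverSum Q V)



abbrev Precosheaf' (X : TopCat.{u}) := Opens X ⥤ AddCommGrpCat.{u}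

/-- The constant cosheaf `G^cos`, with `G^cos(U) = G^{⊕ π₀(U)}`. -/
def constCoshv (X : TopCat.{u}) (G : AddCommGrpCat.{u}) : Precosheaf' X where
  obj U := AddCommGrpCat.of (DirectSum (ConnectedComponents U) (fun _ => (G : Type u)))
  map {V U} h :=
    letI := Classical.decEq (ConnectedComponents V)
    letI := Classical.decEq (ConnectedComponents U)
    AddCommGrpCat.ofHom (DirectSum.toAddMonoid fun c =>
      DirectSum.of (fun _ : ConnectedComponents U => (G : Type u))
        ((continuous_inclusion h.le).connectedComponentsMap c))
  map_id U := by
    letI := Classical.decEq (ConnectedComponents U)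
    ext1
    refine DirectSum.addHom_ext fun c g => ?_
    obtain ⟨x, rfl⟩ := ConnectedComponents.surjective_coe c
    simp [Continuous.connectedComponentsMap]
  map_comp {V W U} h h' := by
    letI := Classical.decEq (ConnectedComponents V)
    ext1
    refine DirectSum.addHom_ext fun c g => ?_
    obtain ⟨x, rfl⟩ := ConnectedComponents.surjective_coe c
    simp [Continuous.connectedComponentsMap, AddCommGrpCat.ofHom, DirectSum.toAddMonoid_of]



/-!
On a locally connected space every open `U` is the disjoint union of its connected components
`U_c`, which are open. Distinct components do not meet and a cosheaf vanishes on `∅` (the empty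
cover), so the cosheaf sequence for the cover of `U` by its components says that
`⊕_c Q(U_c) → Q(U)` is an isomorphism. On a connected `W` the group `G^cos(W)` is a single
copy of `G`, and naturality for `W ⊆ X` shows that `η_W` is `φ = codiag ∘ η_X` precomposed
with `Q(W) → Q(X)`. Hence `η` is determined by `φ` on every `U`, and conversely this formula,
read through `Q(U) ≅ ⊕_c Q(U_c)`, defines a natural transformation from any `φ`.
-/

namespace TopologicalSpace.Opens

open Function

variable {α : Type*} [TopologicalSpace α] [LocallyConnectedSpace α]

instance (U : Opens α) : LocallyConnectedSpace (U : Set α) :=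
  U.isOpen.locallyConnectedSpace

def component (U : Opens α) (c : ConnectedComponents U) : Opens α :=
  ⟨Subtype.val '' (ConnectedComponents.mk ⁻¹' {c}), by
    apply U.isOpen.isOpenEmbedding_subtypeVal.isOpenMap
    obtain ⟨x, rfl⟩ := ConnectedComponents.surjective_coe c
    rw [connectedComponents_preimage_singleton]
    exact isOpen_connectedComponent⟩

lemma mem_component {U : Opens α} {c : ConnectedComponents U} {x : α} :
    x ∈ U.component c ↔ ∃ hx : x ∈ U, ConnectedComponents.mk (⟨x, hx⟩ : U) = c := by
  simp [component]

lemma component_le (U : Opens α) (c : ConnectedComponents U) : U.component c ≤ U :=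
  fun _ hx => (mem_component.mp hx).1

lemma iSup_component (U : Opens α) : ⨆ c, U.component c = U :=
  le_antisymm (iSup_le U.component_le) fun _ hx =>
    Opens.mem_iSup.mpr ⟨_, mem_component.mpr ⟨hx, rfl⟩⟩

lemma isConnected_component (U : Opens α) (c : ConnectedComponents U) :
    _root_.IsConnected (U.component c : Set α) := by
  obtain ⟨x, rfl⟩ := ConnectedComponents.surjective_coe c
  change _root_.IsConnected (Subtype.val '' _)
  rw [connectedComponents_preimage_singleton]
  exact isConnected_connectedComponent.image _ continuous_subtype_val.continuousOn

lemma pairwise_disjoint_component (U : Opens α) : Pairwise (Disjoint on U.component) := by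
  intro i j hij
  rw [onFun, disjoint_iff, eq_bot_iff]
  rintro x ⟨hi, hj⟩
  obtain ⟨_, rfl⟩ := mem_component.mp hi
  obtain ⟨_, rfl⟩ := mem_component.mp hj
  exact hij rfl

lemma component_le_component {V U : Opens α} (h : V ≤ U) (c : ConnectedComponents V) :
    V.component c ≤ U.component ((continuous_inclusion h).connectedComponentsMap c) := by
  intro x hx
  obtain ⟨hxV, rfl⟩ := mem_component.mp hx
  exact mem_component.mpr ⟨h hxV, rfl⟩

end TopologicalSpace.Opens

namespace IsCosheaf

open Function

variable {Q : Precosheaf X}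

lemma subsingleton_of_eq_bot (hQ : IsCosheaf Q) {W : Opens X} (hW : W = ⊥) :
    Subsingleton (Q.obj W) := by
  have hcover : ⨆ i : PEmpty.{u + 1}, (i.elim : Opens X) = W := by
    rw [hW]
    exact iSup_of_empty _
  rw [← hcover]
  exact (hQ _ (Classical.decEq _) _).1.subsingleton

lemma coverDiff_eq_zero (hQ : IsCosheaf Q) {ι : Type u} [DecidableEq ι] {V : ι → Opens X}
    (hV : Pairwise (Disjoint on V)) : coverDiff Q V = 0 := by
  refine DirectSum.addHom_ext fun ⟨i, j⟩ x => ?_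
  rcases eq_or_ne i j with rfl | hij
  · simp only [coverDiff, DirectSum.toAddMonoid_of, AddMonoidHom.sub_apply,
      AddMonoidHom.zero_apply]
    exact sub_self _
  · have := hQ.subsingleton_of_eq_bot (hV hij).eq_bot
    rw [Subsingleton.elim x 0, map_zero, map_zero, AddMonoidHom.zero_apply]

lemma coverSum_bijective (hQ : IsCosheaf Q) {ι : Type u} [DecidableEq ι] {V : ι → Opens X}
    (hV : Pairwise (Disjoint on V)) : Bijective (coverSum Q V) := by
  obtain ⟨hsurj, hexact⟩ := hQ ι ‹_› V
  refine ⟨(injective_iff_map_eq_zero _).mpr fun d hd => ?_, hsurj⟩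
  rwa [← AddMonoidHom.mem_ker, ← hexact, hQ.coverDiff_eq_zero hV, AddMonoidHom.range_zero] at hd

end IsCosheaf

section ComponentDecomposition

open DirectSum

attribute [local instance] Classical.decEq

namespace constCoshv

variable (G : AddCommGrpCat.{u})

def single (U : Opens X) (c : ConnectedComponents U) : G →+ (constCoshv X G).obj U :=
  of (fun _ => G) c

def codiag (U : Opens X) : (constCoshv X G).obj U →+ G :=
  toAddMonoid fun _ => AddMonoidHom.id G

lemma codiag_single (U : Opens X) (c : ConnectedComponents U) (g : G) :
    codiag G U (single G U c g) = g :=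
  toAddMonoid_of _ _ _

lemma hom_ext {U : Opens X} {M : Type*} [AddMonoid M] {f f' : (constCoshv X G).obj U →+ M}
    (h : ∀ c g, f (single G U c g) = f' (single G U c g)) : f = f' :=
  addHom_ext h

lemma single_comp_codiag {U : Opens X} [Subsingleton (ConnectedComponents U)]
    (c : ConnectedComponents U) : (single G U c).comp (codiag G U) = AddMonoidHom.id _ :=
  hom_ext G fun c' g => by
    rw [AddMonoidHom.comp_apply, codiag_single, Subsingleton.elim c c', AddMonoidHom.id_apply]

lemma map_single {V U : Opens X} (h : V ⟶ U) (c : ConnectedComponents V) (g : G) :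
    (constCoshv X G).map h (single G V c g) =
      single G U ((continuous_inclusion h.le).connectedComponentsMap c) g :=
  toAddMonoid_of _ _ _

lemma codiag_comp_map {V U : Opens X} (h : V ⟶ U) :
    (codiag G U).comp ((constCoshv X G).map h).hom = codiag G V :=
  hom_ext G fun c g => (congrArg (codiag G U) (map_single G h c g)).trans
    ((codiag_single G _ _ g).trans (codiag_single G V c g).symm)

variable {G} {Q : Precosheaf X}

lemma codiag_app_map (η : Q ⟶ constCoshv X G) {V U : Opens X} (h : V ⟶ U) (q : Q.obj V) :
    codiag G U (η.app U (Q.map h q)) = codiag G V (η.app V q) := by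
  rw [NatTrans.naturality_apply, ← AddMonoidHom.comp_apply, codiag_comp_map]

end constCoshv

open constCoshv

variable [LocallyConnectedSpace X] {G : AddCommGrpCat.{u}}

namespace Precosheaf

variable (Q : Precosheaf X)

def componentSum (U : Opens X) : (⨁ c, Q.obj (U.component c)) →+ Q.obj U :=
  toAddMonoid fun c => (Q.map (homOfLE (U.component_le c))).hom

lemma componentSum_of (U : Opens X) (c : ConnectedComponents U) (q : Q.obj (U.component c)) :
    Q.componentSum U (of _ c q) = Q.map (homOfLE (U.component_le c)) q :=
  toAddMonoid_of _ _ _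

lemma componentSum_eq (U : Opens X) :
    Q.componentSum U =
      (Q.map (eqToHom U.iSup_component)).hom.comp (coverSum Q U.component) := by
  refine addHom_ext fun c q => ?_
  simp only [componentSum_of, coverSum, AddMonoidHom.comp_apply, toAddMonoid_of]
  rw [← ConcreteCategory.comp_apply, ← Q.map_comp]
  rfl

lemma map_componentSum_of {V U : Opens X} (h : V ⟶ U) (c : ConnectedComponents V)
    (q : Q.obj (V.component c)) :
    Q.map h (Q.componentSum V (of _ c q)) =
      Q.componentSum U (of _ ((continuous_inclusion h.le).connectedComponentsMap c)
        (Q.map (homOfLE (Opens.component_le_component h.le c)) q)) := by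
  rw [componentSum_of, componentSum_of, ← ConcreteCategory.comp_apply, ← Q.map_comp,
    ← ConcreteCategory.comp_apply, ← Q.map_comp]
  rfl

def componentwise (φ : Q.obj ⊤ →+ G) (U : Opens X) :
    (⨁ c, Q.obj (U.component c)) →+ (constCoshv X G).obj U :=
  toAddMonoid fun c => (single G U c).comp (φ.comp (Q.map (homOfLE le_top)).hom)

variable {Q}

lemma componentwise_of (φ : Q.obj ⊤ →+ G) (U : Opens X) (c : ConnectedComponents U)
    (q : Q.obj (U.component c)) :
    Q.componentwise φ U (of _ c q) = single G U c (φ (Q.map (homOfLE le_top) q)) :=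
  toAddMonoid_of _ _ _

lemma codiag_componentwise (φ : Q.obj ⊤ →+ G) (U : Opens X)
    (d : ⨁ c, Q.obj (U.component c)) :
    codiag G U (Q.componentwise φ U d) = φ (Q.map (homOfLE le_top) (Q.componentSum U d)) := by
  induction d using DirectSum.induction_on with
  | zero => simp only [map_zero]
  | of c q =>
    rw [componentwise_of, codiag_single, componentSum_of, ← ConcreteCategory.comp_apply,
      ← Q.map_comp]
    rfl
  | add d d' hd hd' => simp only [map_add, hd, hd']

lemma app_map_component (η : Q ⟶ constCoshv X G) (U : Opens X) (c : ConnectedComponents U)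
    (q : Q.obj (U.component c)) :
    η.app U (Q.map (homOfLE (U.component_le c)) q) =
      single G U c (codiag G ⊤ (η.app ⊤ (Q.map (homOfLE le_top) q))) := by
  have : ConnectedSpace (U.component c) := Subtype.connectedSpace (U.isConnected_component c)
  obtain ⟨⟨z, hz⟩⟩ : Nonempty (U.component c) := inferInstance
  have hzc : (continuous_inclusion (U.component_le c)).connectedComponentsMap
      (ConnectedComponents.mk ⟨z, hz⟩) = c := (Opens.mem_component.mp hz).2
  calc η.app U (Q.map (homOfLE (U.component_le c)) q)
      = (constCoshv X G).map (homOfLE (U.component_le c)) (η.app _ q) :=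
        NatTrans.naturality_apply _ _ _
    _ = (constCoshv X G).map (homOfLE (U.component_le c))
          (single G _ (ConnectedComponents.mk ⟨z, hz⟩) (codiag G _ (η.app _ q))) := by
        rw [← AddMonoidHom.comp_apply (single G _ _), single_comp_codiag, AddMonoidHom.id_apply]
    _ = single G U c (codiag G _ (η.app _ q)) := by rw [map_single, hzc]
    _ = single G U c (codiag G ⊤ (η.app ⊤ (Q.map (homOfLE le_top) q))) := by
        rw [codiag_app_map]

lemma app_comp_componentSum (η : Q ⟶ constCoshv X G) (U : Opens X) :
    (η.app U).hom.comp (Q.componentSum U) =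
      Q.componentwise ((codiag G ⊤).comp (η.app ⊤).hom) U :=
  addHom_ext fun c q => by
    rw [AddMonoidHom.comp_apply, componentSum_of, app_map_component, componentwise_of]
    rfl

end Precosheaf

namespace IsCosheaf

variable {Q : Precosheaf X}

lemma componentSum_bijective (hQ : IsCosheaf Q) (U : Opens X) :
    Function.Bijective (Q.componentSum U) := by
  rw [Q.componentSum_eq]
  exact (ConcreteCategory.bijective_of_isIso (Q.map (eqToHom U.iSup_component))).comp
    (hQ.coverSum_bijective U.pairwise_disjoint_component)

def ofGlobalApp (hQ : IsCosheaf Q) (φ : Q.obj ⊤ →+ G) (U : Opens X) :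
    Q.obj U →+ (constCoshv X G).obj U :=
  (Q.componentwise φ U).comp
    (AddEquiv.ofBijective _ (hQ.componentSum_bijective U)).symm.toAddMonoidHom

lemma ofGlobalApp_componentSum (hQ : IsCosheaf Q) (φ : Q.obj ⊤ →+ G) (U : Opens X)
    (d : ⨁ c, Q.obj (U.component c)) :
    hQ.ofGlobalApp φ U (Q.componentSum U d) = Q.componentwise φ U d :=
  congrArg (Q.componentwise φ U) ((AddEquiv.ofBijective _ _).symm_apply_apply d)

def ofGlobal (hQ : IsCosheaf Q) (φ : Q.obj ⊤ →+ G) : Q ⟶ constCoshv X G where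
  app U := AddCommGrpCat.ofHom (hQ.ofGlobalApp φ U)
  naturality {V U} h := AddCommGrpCat.hom_ext <|
    (AddMonoidHom.cancel_right (hQ.componentSum_bijective V).2).mp <| addHom_ext fun c q => by
      change hQ.ofGlobalApp φ U (Q.map h (Q.componentSum V (of _ c q))) =
        (constCoshv X G).map h (hQ.ofGlobalApp φ V (Q.componentSum V (of _ c q)))
      rw [Precosheaf.map_componentSum_of, ofGlobalApp_componentSum, ofGlobalApp_componentSum,
        Precosheaf.componentwise_of, Precosheaf.componentwise_of, map_single,
        ← ConcreteCategory.comp_apply, ← Q.map_comp]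
      rfl

def homEquiv (hQ : IsCosheaf Q) : (Q ⟶ constCoshv X G) ≃ (Q.obj ⊤ →+ G) where
  toFun η := (codiag G ⊤).comp (η.app ⊤).hom
  invFun := hQ.ofGlobal
  left_inv η := by
    ext U x
    obtain ⟨d, rfl⟩ := (hQ.componentSum_bijective U).2 x
    exact (hQ.ofGlobalApp_componentSum _ U d).trans
      (DFunLike.congr_fun (Precosheaf.app_comp_componentSum η U) d).symm
  right_inv φ := by
    ext x
    obtain ⟨d, rfl⟩ := (hQ.componentSum_bijective ⊤).2 x
    calc codiag G ⊤ (hQ.ofGlobalApp φ ⊤ (Q.componentSum ⊤ d))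
        = φ (Q.map (𝟙 ⊤) (Q.componentSum ⊤ d)) := by
          rw [ofGlobalApp_componentSum, Precosheaf.codiag_componentwise]
          rfl
      _ = φ (Q.componentSum ⊤ d) := by
          rw [Q.map_id]
          rfl

end IsCosheaf

end ComponentDecomposition

/-- For a locally connected space `X`, any cosheaf `Q` on `X`, and any abelian
group `G`, the canonical map `Hom_Coshv(Q, G^cos) → Hom_Ab(Q(X), G)` (evaluate at `X` and
compose with the codiagonal `G^{⊕π₀(X)} → G`) is bijective; i.e. the constant-cosheaf functor
`G ↦ G^cos` is right adjoint to the global-sections functor `Q ↦ Q(X)` on cosheaves. -/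
theorem coshv_const_adjunction (X : TopCat.{u}) [LocallyConnectedSpace X]
    (Q : Precosheaf' X) (hQ : IsCosheaf Q) (G : AddCommGrpCat.{u})
    [DecidableEq (ConnectedComponents (⊤ : Opens X))] :
    Function.Bijective (fun η : Q ⟶ constCoshv X G =>
      (DirectSum.toAddMonoid (fun _ : ConnectedComponents (⊤ : Opens X) =>
          AddMonoidHom.id (G : Type u))).comp
        ((η.app ⊤).hom : Q.obj ⊤ →+ (constCoshv X G).obj ⊤)) := by
  have hcodiag : (DirectSum.toAddMonoid fun _ : ConnectedComponents (⊤ : Opens X) =>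
      AddMonoidHom.id (G : Type u)) = constCoshv.codiag G ⊤ := by
    unfold constCoshv.codiag
    congr
    exact Subsingleton.elim _ _
  rw [hcodiag]
  exact hQ.homEquiv.bijective
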